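/- arXiv:2101.12180 — 10 statements merged into one kernel-verified Lean document; each statement's English description precedes it below -/
import Mathlib

section
/- For every positive integer n, the sum over j from 0 to n of C(n,j)·(-1)^(n-j)/(2j+1) equals (-4)^n·(n!)²/(2n+1)!. -/
/-!
The sum is the `n`-th forward difference with step `2` of `t ↦ t⁻¹` at `1`. Telescoping one step
at a time gives `Δₕⁿ (t⁻¹) (x) = (-h)ⁿ n! / ∏_{k ≤ n} (x + k h)`, and for `x = 1`, `h = 2` the
product is `(2n+1)‼ = (2n+1)! / (2ⁿ n!)`.
-/

open Finset Nat fwdDiff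

theorem fwdDiff_iter_inv {K : Type*} [Field K] (h : K) (n : ℕ) (x : K)
    (hx : ∀ k ≤ n, x + k * h ≠ 0) :
    Δ_[h] ^[n] (·⁻¹) x = (-h) ^ n * n ! / ∏ k ∈ range (n + 1), (x + k * h) := by
  induction n generalizing x with
  | zero => simp
  | succ n ih =>
    have hshift : ∀ k ≤ n, x + h + k * h = x + (k + 1 : ℕ) * h := fun k _ => by push_cast; ring
    rw [Function.iterate_succ_apply', fwdDiff, ih _ fun k hk => hshift k hk ▸ hx (k + 1) (by omega),
      ih _ fun k hk => hx k (by omega), prod_congr rfl fun k hk => hshift k (by simp at hk; omega),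
      prod_range_succ' (fun k : ℕ => x + k * h) (n + 1), prod_range_succ' (fun k : ℕ => x + k * h) n,
      prod_range_succ]
    have hA : ∏ k ∈ range n, (x + (k + 1 : ℕ) * h) ≠ 0 :=
      prod_ne_zero_iff.mpr fun k hk => hx (k + 1) (by simp at hk; omega)
    generalize ∏ k ∈ range n, (x + (k + 1 : ℕ) * h) = A at hA ⊢
    have hx₀ : x ≠ 0 := by simpa using hx 0 (Nat.zero_le _)
    have hlast : x + (n + 1 : ℕ) * h ≠ 0 := hx (n + 1) le_rfl
    push_cast [factorial_succ, zero_mul, add_zero] at hlast ⊢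
    rw [div_sub_div _ _ (mul_ne_zero hA hlast) (mul_ne_zero hA hx₀),
      div_eq_div_iff (by positivity) (by positivity)]
    ring

theorem prod_range_two_mul_add_one (n : ℕ) : ∏ k ∈ range (n + 1), (2 * k + 1) = (2 * n + 1)‼ := by
  rw [doubleFactorial_eq_prod_odd, prod_range_succ']
  simp [mul_add]

theorem stmt_0_general (n : ℕ) :
    ∑ j ∈ Finset.range (n + 1), (n.choose j : ℚ) * (-1) ^ (n - j) / (2 * j + 1)
      = (-4) ^ n * (n.factorial : ℚ) ^ 2 / ((2 * n + 1).factorial : ℚ) := by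
  have hdiff := fwdDiff_iter_inv (2 : ℚ) n 1 fun k _ => by positivity
  rw [fwdDiff_iter_eq_sum_shift] at hdiff
  have hsum : ∑ j ∈ range (n + 1), ((-1 : ℤ) ^ (n - j) * n.choose j) • (1 + j • (2 : ℚ))⁻¹
      = ∑ j ∈ range (n + 1), (n.choose j : ℚ) * (-1) ^ (n - j) / (2 * j + 1) :=
    sum_congr rfl fun j _ => by push_cast [zsmul_eq_mul, nsmul_eq_mul]; ring
  have hprod : ∏ k ∈ range (n + 1), (1 + k * (2 : ℚ)) = (2 * n + 1)‼ := by
    rw [← prod_range_two_mul_add_one]; push_cast; exact prod_congr rfl fun k _ => by ring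
  have hfact : ((2 * n + 1) ! : ℚ) = (2 * n + 1)‼ * (2 ^ n * n !) := by
    rw [factorial_eq_mul_doubleFactorial, doubleFactorial_two_mul]; push_cast; ring
  rw [← hsum, hdiff, hprod, hfact, show (-4 : ℚ) = -2 * 2 by norm_num, mul_pow]
  field_simp

theorem stmt_0 (n : ℕ) (hn : 0 < n) :
    ∑ j ∈ Finset.range (n + 1), (n.choose j : ℚ) * (-1) ^ (n - j) / (2 * j + 1)
      = (-4) ^ n * (n.factorial : ℚ) ^ 2 / ((2 * n + 1).factorial : ℚ) :=
  stmt_0_general n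
end

section
/- If m > 3 is an odd integer, then φ(m)/2 is odd if and only if m = q^s for some prime q ≡ 3 (mod 4) and positive integer s. -/
theorem stmt_2 (m : ℕ) (hm : 3 < m) (hodd : Odd m) :
    Odd (m.totient / 2) ↔
      ∃ q s : ℕ, q.Prime ∧ q % 4 = 3 ∧ 0 < s ∧ m = q ^ s := by
  have hm0 : m ≠ 0 := by omega
  have key : ∀ q s : ℕ, q.Prime → Odd q → 0 < s →
      (Odd ((q ^ s).totient / 2) ↔ q % 4 = 3) := by
    intro q s hq hqo hs
    rw [Nat.totient_prime_pow hq hs]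
    have hq1 : q % 2 = 1 := Nat.odd_iff.mp hqo
    have h2 : 2 ∣ (q - 1) := by omega
    rw [Nat.mul_div_assoc _ h2, Nat.odd_mul]
    have hqodd : Odd (q ^ (s - 1)) := hqo.pow
    constructor
    · rintro ⟨_, h⟩
      rw [Nat.odd_iff] at h
      omega
    · intro h
      exact ⟨hqodd, Nat.odd_iff.mpr (by omega)⟩
  constructor
  · intro h
    have hq : m.minFac.Prime := Nat.minFac_prime (by omega)
    have hq2 : m.minFac ≠ 2 := by
      intro heq
      have : 2 ∣ m := heq ▸ Nat.minFac_dvd m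
      rw [Nat.odd_iff] at hodd
      omega
    have hqo : Odd m.minFac := hq.odd_of_ne_two hq2
    obtain ⟨q, hq', hqo', k, n, hmm, hk1, hcop⟩ :
        ∃ q, q.Prime ∧ Odd q ∧
          ∃ k n, m = q ^ k * n ∧ 0 < k ∧ Nat.Coprime (q ^ k) n := by
      refine ⟨m.minFac, hq, hqo,
        m.factorization m.minFac, m / m.minFac ^ m.factorization m.minFac,
        (Nat.ordProj_mul_ordCompl_eq_self m m.minFac).symm,
        hq.factorization_pos_of_dvd hm0 (Nat.minFac_dvd m),
        Nat.Coprime.pow_left _ (Nat.coprime_ordCompl hq hm0)⟩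
    by_cases hn1 : n = 1
    · rw [hn1, mul_one] at hmm
      refine ⟨q, k, hq', ?_, hk1, hmm⟩
      exact (key q k hq' hqo' hk1).mp (by rwa [← hmm])
    · exfalso
      have ht : m.totient = (q ^ k).totient * n.totient := by
        rw [hmm]; exact Nat.totient_mul hcop
      have hndvd : n ∣ m := ⟨q ^ k, by rw [hmm]; ring⟩
      have hn0 : n ≠ 0 := by
        intro h0; rw [h0, mul_zero] at hmm; omega
      have hnodd : n % 2 = 1 := by
        rcases Nat.even_or_odd n with he | ho
        · exfalso
          have h2m : 2 ∣ m := dvd_trans he.two_dvd hndvd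
          rw [Nat.odd_iff] at hodd; omega
        · exact Nat.odd_iff.mp ho
      have hn2 : 2 < n := by omega
      have hq3 : 3 ≤ q := by
        have := hq'.two_le
        have := Nat.odd_iff.mp hqo'
        omega
      have hqk2 : 2 < q ^ k := by
        calc 2 < q := by omega
        _ ≤ q ^ k := Nat.le_self_pow (by omega) _
      have e1 : 2 ∣ (q ^ k).totient := (Nat.totient_even hqk2).two_dvd
      have e2 : 2 ∣ n.totient := (Nat.totient_even hn2).two_dvd
      obtain ⟨a, ha⟩ := e1
      obtain ⟨b, hb⟩ := e2
      have h4 : m.totient = 4 * (a * b) := by rw [ht, ha, hb]; ring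
      rw [Nat.odd_iff, h4] at h
      omega
  · rintro ⟨q, s, hq, h4, hs, rfl⟩
    have hqo : Odd q := Nat.odd_iff.mpr (by omega)
    exact (key q s hq hqo hs).mpr h4
end

section
/- If m is an odd integer greater than 3 and p is an odd prime, then φ(m)/2 = p if and only if m = 2p+1 is prime, or m = 9 and p = 3. -/
theorem stmt_3 (m p : ℕ) (hm : 3 < m) (hmodd : Odd m) (hp : p.Prime) (hpodd : Odd p) :
    m.totient / 2 = p ↔ (m = 2 * p + 1 ∧ m.Prime) ∨ (m = 9 ∧ p = 3) := by
  have hm0 : m ≠ 0 := by omega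
  have hm1 : m ≠ 1 := by omega
  constructor
  · intro h
    have heven : Even m.totient := Nat.totient_even (by omega)
    have htot : m.totient = 2 * p := by
      obtain ⟨k, hk⟩ := heven
      omega
    obtain ⟨q, hq, hqd⟩ := Nat.exists_prime_and_dvd hm1
    have hqodd : q ≠ 2 := by
      rintro rfl
      rw [Nat.odd_iff] at hmodd
      omega
    have hq3 : 3 ≤ q := by
      rcases hq.eq_two_or_odd' with h2 | ho
      · exact absurd h2 hqodd
      · have := hq.two_le
        rw [Nat.odd_iff] at ho
        omega
    set k := m.factorization q with hkdef
    have hk1 : 0 < k := hq.factorization_pos_of_dvd hm0 hqd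
    have hdecomp : q ^ k * (m / q ^ k) = m := Nat.ordProj_mul_ordCompl_eq_self m q
    have hcop : Nat.Coprime (q ^ k) (m / q ^ k) :=
      Nat.Coprime.pow_left k (Nat.coprime_ordCompl hq hm0)
    set r := m / q ^ k with hrdef
    clear_value k r
    have hr0 : r ≠ 0 := by
      intro h0; rw [h0, mul_zero] at hdecomp; exact hm0 hdecomp.symm
    have htotmul : m.totient = (q ^ k).totient * r.totient := by
      rw [← hdecomp, Nat.totient_mul hcop]
    have htqk : (q ^ k).totient = q ^ (k - 1) * (q - 1) := Nat.totient_prime_pow hq hk1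
    have hqm1even : Even (q - 1) :=
      Nat.Odd.sub_odd (hq.eq_two_or_odd'.resolve_left hqodd) odd_one
    have hqkeven : Even ((q ^ k).totient) := by
      rw [htqk]; exact hqm1even.mul_left _
    have hr1 : r = 1 := by
      by_contra hr1
      have hr2 : 2 ≤ r := by omega
      have hrodd : r % 2 = 1 := by
        rcases Nat.even_or_odd r with he | ho
        · exfalso
          have h2m : 2 ∣ m := dvd_trans he.two_dvd (Dvd.intro_left _ hdecomp)
          rw [Nat.odd_iff] at hmodd
          omega
        · exact Nat.odd_iff.mp ho
      have hr3 : 2 < r := by omega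
      have hreven : Even r.totient := Nat.totient_even hr3
      obtain ⟨a, ha⟩ := hqkeven
      obtain ⟨b, hb⟩ := hreven
      have h4 : 4 ∣ m.totient := by
        rw [htotmul, ha, hb]
        exact ⟨a * b, by ring⟩
      rw [htot] at h4
      have h2p : 2 ∣ p := by omega
      have := (Nat.prime_dvd_prime_iff_eq Nat.prime_two hp).mp h2p
      rw [← this, Nat.odd_iff] at hpodd
      omega
    have hmqk : m = q ^ k := by
      rw [← hdecomp, hr1, mul_one]
    have hkey : q ^ (k - 1) * (q - 1) = 2 * p := by
      rw [← htqk, ← hmqk, htot]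
    rcases Nat.lt_or_ge k 2 with hk2 | hk2
    · have hk1' : k = 1 := by omega
      rw [hk1'] at hkey hmqk
      simp at hkey hmqk
      left
      exact ⟨by omega, hmqk ▸ hq⟩
    · have hdvd : q ∣ 2 * p := by
        rw [← hkey]
        exact Dvd.dvd.mul_right (dvd_pow_self q (by omega)) _
      have hqp : q = p := by
        rcases (Nat.Prime.dvd_mul hq).mp hdvd with h2 | hqp
        · exact absurd ((Nat.prime_dvd_prime_iff_eq hq Nat.prime_two).mp h2) hqodd
        · exact (Nat.prime_dvd_prime_iff_eq hq hp).mp hqp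
      subst hqp
      have hk3 : k < 3 := by
        by_contra hk3
        have hsq : q ^ 2 ∣ 2 * q := by
          rw [← hkey]
          exact Dvd.dvd.mul_right (pow_dvd_pow q (by omega)) _
        have h2' : q * q ∣ q * 2 := by
          rw [pow_two] at hsq
          rwa [mul_comm 2 q] at hsq
        have hq2d : q ∣ 2 := (Nat.mul_dvd_mul_iff_left hq.pos).mp h2'
        have := Nat.le_of_dvd (by norm_num) hq2d
        omega
      have hk2' : k = 2 := by omega
      rw [hk2'] at hkey hmqk
      simp [pow_one] at hkey
      have hq1 : q - 1 = 2 :=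
        Nat.eq_of_mul_eq_mul_left hq.pos (by linarith [hkey] : q * (q - 1) = q * 2)
      have hq3' : q = 3 := by omega
      right
      rw [hmqk, hq3']
      exact ⟨by norm_num, rfl⟩
  · rintro (⟨hm2p, hmp⟩ | ⟨hm9, hp3⟩)
    · rw [Nat.totient_prime hmp, hm2p]
      omega
    · subst hm9 hp3
      decide
end

section
/- For every integer k > 1, the rational number (2k-1)!/(4^(k-1)·((k-1)!)²) is not an integer; equivalently, the 2-adic valuation of (2k-1)!/((k-1)!)² is strictly less than 2k-2. -/
/-!
Legendre's formula gives `v₂(n!) = n - s₂(n)`, where `s₂` is the binary digit sum, and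
`s₂(2m + 1) = s₂(m) + 1`. Hence `v₂((2m + 1)! / (m!)²) = s₂(m)`, which is at most `m`, so it is
`< 2m` and dividing further by `4 ^ m` leaves a negative valuation once `m ≥ 1`.
-/

open Nat

theorem padicValNat_two_factorial_add_digits_sum (n : ℕ) :
    padicValNat 2 n ! + (digits 2 n).sum = n := by
  have h := sub_one_mul_padicValNat_factorial (p := 2) n
  have hle := digit_sum_le 2 n
  simp only [Nat.add_one_sub_one, one_mul] at h
  omega

theorem digits_two_sum_two_mul_add_one (m : ℕ) :
    (digits 2 (2 * m + 1)).sum = (digits 2 m).sum + 1 := by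
  rw [add_comm, digits_add 2 one_lt_two 1 m one_lt_two (Or.inl one_ne_zero), List.sum_cons,
    add_comm]

theorem padicValNat_two_factorial_two_mul_add_one (m : ℕ) :
    padicValNat 2 (2 * m + 1)! + (digits 2 m).sum = 2 * m := by
  have h := padicValNat_two_factorial_add_digits_sum (2 * m + 1)
  rw [digits_two_sum_two_mul_add_one] at h
  omega

theorem padicValRat_two_factorial_two_mul_add_one_div_sq (m : ℕ) :
    padicValRat 2 ((2 * m + 1)! / (m ! : ℚ) ^ 2) = (digits 2 m).sum := by
  have hnum := padicValNat_two_factorial_two_mul_add_one m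
  have hden := padicValNat_two_factorial_add_digits_sum m
  rw [padicValRat.div (by positivity) (by positivity), padicValRat.pow,
    padicValRat.of_nat, padicValRat.of_nat]
  omega

theorem padicValRat_two_div_four_pow {q : ℚ} (hq : q ≠ 0) (m : ℕ) :
    padicValRat 2 (q / 4 ^ m) = padicValRat 2 q - 2 * m := by
  have h4 : (4 : ℚ) ^ m = ((2 ^ (2 * m) : ℕ) : ℚ) := by push_cast; rw [pow_mul]; norm_num
  rw [padicValRat.div hq (by positivity), h4, padicValRat.of_nat, padicValNat.prime_pow]
  push_cast
  ring

theorem not_exists_intCast_eq_of_padicValRat_neg {p : ℕ} {q : ℚ} (h : padicValRat p q < 0) :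
    ¬ ∃ z : ℤ, q = z := by
  rintro ⟨z, rfl⟩
  rw [padicValRat.of_int] at h
  omega

theorem stmt_4 (k : ℕ) (hk : 1 < k) :
    (¬ ∃ z : ℤ,
      ((2 * k - 1).factorial : ℚ) / (4 ^ (k - 1) * ((k - 1).factorial : ℚ) ^ 2) = z) ∧
    padicValRat 2 (((2 * k - 1).factorial : ℚ) / ((k - 1).factorial : ℚ) ^ 2)
      < 2 * (k : ℤ) - 2 := by
  obtain ⟨m, rfl⟩ : ∃ m, k = m + 1 := ⟨k - 1, by omega⟩
  rw [show 2 * (m + 1) - 1 = 2 * m + 1 by omega, Nat.add_sub_cancel, div_mul_eq_div_div_swap]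
  have hval := padicValRat_two_factorial_two_mul_add_one_div_sq m
  have hsum : (digits 2 m).sum ≤ m := digit_sum_le 2 m
  refine ⟨not_exists_intCast_eq_of_padicValRat_neg (p := 2) ?_, by omega⟩
  rw [padicValRat_two_div_four_pow (by positivity), hval]
  omega
end

section
/- Let u, v, D be polynomials over ℂ with v ≠ 0, D nonconstant, satisfying u² - D·v² = 1. For each n ≥ 1 define v_n by the formula v_n = ((u + v·√D)^n - (u - v·√D)^n)/(2·√D), computed in the ring ℂ[t][√D] = ℂ[t][X]/(X² - D). Then v_n = v · ∏_{m | n, m > 1} ψ_m(u), where ψ_m(X) = ∏_{ζ : Φ_m(ζ)=0} ((u + v√D) - ζ(u - v√D)) and Φ_m is the m-th cyclotomic polynomial; moreover each ψ_m(u) lies in ℤ[2u] ⊆ ℂ[t]. -/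
open Polynomial

/-- The quadratic extension `ℂ[t][X]/(X² - D)` of `ℂ[t]`. -/
noncomputable abbrev PellExt (D : Polynomial ℂ) : Type :=
  AdjoinRoot ((X : Polynomial (Polynomial ℂ)) ^ 2 - C D)

/-- The canonical map `ℂ[t] → ℂ[t][√D]`. -/
noncomputable def pellOf (D : Polynomial ℂ) : Polynomial ℂ →+* PellExt D :=
  AdjoinRoot.of _

/-- The square root of `D` in `ℂ[t][√D]`. -/
noncomputable def pellSqrt (D : Polynomial ℂ) : PellExt D :=
  AdjoinRoot.root _

/-!
With `α = u + v√D` and `β = u - v√D` the Pell equation says `αβ = 1`, so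
`α - ζβ = β (α² - ζ)` and `ψ_m(u) = β ^ φ(m) Φ_m(α²)`. Since `∏_{m ∣ n} Φ_m = X ^ n - 1`, the
product of these over all divisors of `n` is `β ^ n (α ^ (2n) - 1) = α ^ n - β ^ n`, and the
factor `m = 1` is `α - β = 2v√D`. For `m > 1` the cyclotomic polynomial is palindromic, so
`β ^ φ(m) Φ_m(α²)` is an integer combination of the `α ^ i + β ^ i`, which are Dickson
polynomials evaluated at `α + β = 2u`.
-/

open Finset

theorem Finset.sum_range_succ_eq_sum_pairs {M : Type*} [AddCommMonoid M] (f : ℕ → M) (k : ℕ) :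
    ∑ j ∈ range (k + 1), f j =
      ∑ j ∈ range (k + 1), if 2 * j < k then f j + f (k - j) else if 2 * j = k then f j else 0 := by
  have hsplit : ∀ j, (if 2 * j < k then f j + f (k - j) else if 2 * j = k then f j else 0) =
      (if 2 * j ≤ k then f j else 0) + (if 2 * j < k then f (k - j) else 0) := by
    intro j
    split_ifs <;> first | omega | simp
  have hreflect : ∑ j ∈ range (k + 1), (if 2 * j < k then f (k - j) else 0) =
      ∑ j ∈ range (k + 1), if k < 2 * j then f j else 0 := by
    rw [← sum_range_reflect]
    refine sum_congr rfl fun j hj => ?_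
    have hj : j ≤ k := Nat.lt_succ_iff.mp (mem_range.mp hj)
    rw [show k + 1 - 1 - j = k - j by omega, Nat.sub_sub_self hj]
    congr 1
    exact propext (by omega)
  rw [sum_congr rfl fun j _ => hsplit j, sum_add_distrib, hreflect, ← sum_add_distrib]
  refine sum_congr rfl fun j _ => ?_
  split_ifs <;> first | omega | simp

section Palindromic

variable {S R : Type*} [CommRing S] [CommRing R] [Algebra S R]

theorem pow_mul_pow_add_of_mul_eq_one {a b : R} (hab : a * b = 1) (i n : ℕ) :
    a ^ i * b ^ (i + n) = b ^ n := by
  rw [pow_add, ← mul_assoc, ← mul_pow, hab, one_pow, one_mul]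

theorem pow_mul_aeval_sq_eq_sum {a b : R} (hab : a * b = 1) (p : S[X]) {k : ℕ}
    (hk : p.natDegree ≤ k) :
    b ^ k * aeval (a ^ 2) p = ∑ j ∈ range (k + 1), p.coeff j • (a ^ j * b ^ (k - j)) := by
  rw [aeval_eq_sum_range' (Nat.lt_succ_of_le hk), mul_sum]
  refine sum_congr rfl fun j hj => ?_
  have hj : j ≤ k := Nat.lt_succ_iff.mp (mem_range.mp hj)
  rw [mul_smul_comm, ← pow_mul, two_mul, pow_add, mul_comm, mul_assoc,
    ← Nat.add_sub_cancel' hj, pow_mul_pow_add_of_mul_eq_one hab, Nat.add_sub_cancel_left]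

/-- For palindromic `p` of degree `k`, the polynomial `q` with `q (x + x⁻¹) = x⁻ᵏ p (x²)`:
the terms of degrees `j` and `k - j` pair up to `x ^ i + x⁻ⁱ`, the Dickson polynomial
`dickson 1 1 i` evaluated at `x + x⁻¹`. -/
noncomputable def dicksonTransform (p : S[X]) : S[X] :=
  ∑ j ∈ range (p.natDegree + 1), C (p.coeff j) *
    if 2 * j < p.natDegree then dickson 1 1 (p.natDegree - 2 * j)
    else if 2 * j = p.natDegree then 1 else 0

theorem aeval_add_dicksonTransform {a b : R} (hab : a * b = 1) {p : S[X]} (hp : p.reverse = p) :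
    aeval (a + b) (dicksonTransform p) = b ^ p.natDegree * aeval (a ^ 2) p := by
  set k := p.natDegree
  have hpal : ∀ j ≤ k, p.coeff (k - j) = p.coeff j := fun j hj => by
    conv_rhs => rw [← hp, coeff_reverse, revAt_le hj]
  rw [pow_mul_aeval_sq_eq_sum hab p le_rfl, sum_range_succ_eq_sum_pairs, dicksonTransform,
    map_sum]
  refine sum_congr rfl fun j hj => ?_
  have hj : j ≤ k := Nat.lt_succ_iff.mp (mem_range.mp hj)
  rw [map_mul, aeval_C, ← Algebra.smul_def]
  split_ifs with hlt heq
  · have hd :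
        aeval (a + b) (dickson 1 (1 : S) (k - 2 * j)) = a ^ (k - 2 * j) + b ^ (k - 2 * j) := by
      rw [aeval_def, eval₂_eq_eval_map, map_dickson, map_one, dickson_one_one_eval_add_inv a b hab]
    rw [hd, hpal j hj, ← smul_add, Nat.sub_sub_self hj]
    have hb : a ^ j * b ^ (k - j) = b ^ (k - 2 * j) := by
      rw [show k - j = j + (k - 2 * j) by omega, pow_mul_pow_add_of_mul_eq_one hab]
    have ha : a ^ (k - j) * b ^ j = a ^ (k - 2 * j) := by
      rw [show k - j = j + (k - 2 * j) by omega, mul_comm,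
        pow_mul_pow_add_of_mul_eq_one (mul_comm a b ▸ hab)]
    rw [hb, ha, add_comm]
  · rw [map_one, show k - j = j by omega, ← mul_pow, hab, one_pow]
  · simp

end Palindromic

theorem Polynomial.reverse_prod {R ι : Type*} [CommSemiring R] [NoZeroDivisors R] (s : Finset ι)
    (f : ι → R[X]) : (∏ i ∈ s, f i).reverse = ∏ i ∈ s, (f i).reverse := by
  classical
  induction s using Finset.induction_on with
  | empty => rw [prod_empty, prod_empty, ← C_1, reverse_C]
  | insert i s hi ih => rw [prod_insert hi, prod_insert hi, reverse_mul_of_domain, ih]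

theorem Polynomial.reverse_X_sub_C {R : Type*} [CommRing R] [Nontrivial R] (r : R) :
    (X - C r).reverse = 1 - C r * X := by
  have hX : (X : R[X]).reverse = 1 := by
    rw [← one_mul X, ← C_1, reverse_mul_X, reverse_C]
  rw [sub_eq_add_neg, ← C_neg, reverse_add_C, hX, natDegree_X, pow_one, C_neg, neg_mul,
    ← sub_eq_add_neg]

theorem Polynomial.reverse_map_of_injective {R S : Type*} [Semiring R] [Semiring S] {f : R →+* S}
    (hf : Function.Injective f) (p : R[X]) : (p.map f).reverse = p.reverse.map f := by
  ext j
  rw [coeff_reverse, coeff_map, coeff_map, coeff_reverse, natDegree_map_eq_of_injective hf]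

theorem IsPrimitiveRoot.reverse_cyclotomic {K : Type*} [Field K] {μ : K} {m : ℕ}
    (hμ : IsPrimitiveRoot μ m) (hm : 1 < m) : (cyclotomic m K).reverse = cyclotomic m K := by
  have hpos : 0 < m := by omega
  have hprod : ∏ ζ ∈ primitiveRoots m K, -ζ = 1 := by
    simpa [cyclotomic_eq_prod_X_sub_primitiveRoots hμ, coeff_zero_eq_eval_zero, eval_prod]
      using cyclotomic_coeff_zero K hm
  have hfactor : ∀ ζ ∈ primitiveRoots m K, (X - C ζ).reverse = C (-ζ) * (X - C ζ⁻¹) := by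
    intro ζ hζ
    have hζ0 : ζ ≠ 0 := ((mem_primitiveRoots hpos).mp hζ).ne_zero hpos.ne'
    rw [reverse_X_sub_C, mul_sub, ← C_mul, neg_mul, mul_inv_cancel₀ hζ0, C_neg, C_neg, C_1]
    ring
  have hinv : ∏ ζ ∈ primitiveRoots m K, (X - C ζ⁻¹) = ∏ ζ ∈ primitiveRoots m K, (X - C ζ) :=
    prod_nbij' (·⁻¹) (·⁻¹)
      (fun ζ hζ => (mem_primitiveRoots hpos).mpr ((mem_primitiveRoots hpos).mp hζ).inv)
      (fun ζ hζ => (mem_primitiveRoots hpos).mpr ((mem_primitiveRoots hpos).mp hζ).inv)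
      (fun ζ _ => inv_inv ζ) (fun ζ _ => inv_inv ζ) (fun _ _ => rfl)
  rw [cyclotomic_eq_prod_X_sub_primitiveRoots hμ, reverse_prod, prod_congr rfl hfactor,
    prod_mul_distrib, ← map_prod, hprod, map_one, one_mul, hinv]

theorem Polynomial.reverse_cyclotomic_int {m : ℕ} (hm : 1 < m) :
    (cyclotomic m ℤ).reverse = cyclotomic m ℤ := by
  apply map_injective _ (Int.castRingHom ℂ).injective_int
  rw [← reverse_map_of_injective (Int.castRingHom ℂ).injective_int, map_cyclotomic]
  exact (Complex.isPrimitiveRoot_exp m (by omega)).reverse_cyclotomic hm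

theorem Nat.filter_one_lt_divisors (n : ℕ) : n.divisors.filter (1 < ·) = n.divisors.erase 1 := by
  rw [← filter_ne']
  refine filter_congr fun m hm => ?_
  have := Nat.pos_of_mem_divisors hm
  omega

section UnitPair

variable {R : Type*} [CommRing R] {a b : R}

theorem prod_divisors_pow_totient_mul_eval_cyclotomic (hab : a * b = 1) {n : ℕ} (hn : 0 < n) :
    ∏ m ∈ n.divisors, b ^ m.totient * (cyclotomic m R).eval (a ^ 2) = a ^ n - b ^ n := by
  rw [prod_mul_distrib, prod_pow_eq_pow_sum, Nat.sum_totient, ← eval_prod,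
    prod_cyclotomic_eq_X_pow_sub_one hn, eval_sub, eval_pow, eval_X, eval_one, mul_sub, mul_one,
    ← pow_mul, mul_comm, pow_mul, ← mul_pow, sq, mul_assoc, hab, mul_one]

theorem pow_sub_pow_eq_sub_mul_prod_eval_cyclotomic (hab : a * b = 1) {n : ℕ} (hn : 0 < n) :
    a ^ n - b ^ n =
      (a - b) * ∏ m ∈ n.divisors.filter (1 < ·), b ^ m.totient * (cyclotomic m R).eval (a ^ 2) := by
  have hone : b ^ Nat.totient 1 * (cyclotomic 1 R).eval (a ^ 2) = a - b := by
    rw [Nat.totient_one, cyclotomic_one, eval_sub, eval_X, eval_one]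
    linear_combination a * hab
  rw [← prod_divisors_pow_totient_mul_eval_cyclotomic hab hn, Nat.filter_one_lt_divisors, ← hone]
  exact (mul_prod_erase _ _ (Nat.one_mem_divisors.mpr hn.ne')).symm

theorem prod_primitiveRoots_sub_mul {K : Type*} [Field K] [Algebra K R] {μ : K} {m : ℕ}
    (hμ : IsPrimitiveRoot μ m) (hab : a * b = 1) :
    ∏ ζ ∈ primitiveRoots m K, (a - algebraMap K R ζ * b) =
      b ^ m.totient * (cyclotomic m R).eval (a ^ 2) := by
  have hfactor : ∀ ζ : K, a - algebraMap K R ζ * b = b * (a ^ 2 - algebraMap K R ζ) := fun ζ => by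
    linear_combination (-a) * hab
  rw [prod_congr rfl fun ζ _ => hfactor ζ, prod_mul_distrib, prod_const, hμ.card_primitiveRoots,
    ← map_cyclotomic m (algebraMap K R), cyclotomic_eq_prod_X_sub_primitiveRoots hμ,
    Polynomial.map_prod, eval_prod]
  simp only [Polynomial.map_sub, map_X, map_C, eval_sub, eval_X, eval_C]

end UnitPair

theorem AdjoinRoot.of_mul_root_eq_zero {R : Type*} [CommRing R] {f : R[X]} (hf : f.Monic)
    (hdeg : 1 < f.natDegree) {x : R} (h : of f x * root f = 0) : x = 0 := by
  by_contra hx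
  rw [← mk_C, ← mk_X, ← map_mul, C_mul_X_eq_monomial, mk_eq_zero] at h
  exact hf.not_dvd_of_natDegree_lt (by rwa [Ne, monomial_eq_zero_iff])
    (natDegree_monomial_le x |>.trans_lt hdeg) h

theorem Polynomial.hom_map_intCast_comp {K A : Type*} [CommRing K] [CommRing A] [Algebra ℤ A]
    (f : K[X] →+* A) (q : ℤ[X]) (x : K[X]) :
    f ((q.map (Int.castRingHom K)).comp x) = aeval (f x) q := by
  rw [comp, hom_eval₂, eval₂_map, aeval_def]
  congr 1
  exact RingHom.ext_int _ _

theorem pellSqrt_sq (D : Polynomial ℂ) : pellSqrt D ^ 2 = pellOf D D := by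
  have h := AdjoinRoot.eval₂_root ((X : Polynomial (Polynomial ℂ)) ^ 2 - C D)
  rwa [eval₂_sub, eval₂_X_pow, eval₂_C, sub_eq_zero] at h

theorem eq_of_pellOf_mul_two_pellSqrt_eq {D x y : Polynomial ℂ}
    (h : pellOf D x * (2 * pellSqrt D) = pellOf D y * (2 * pellSqrt D)) : x = y := by
  have h2 : 2 * (x - y) = 0 := by
    refine AdjoinRoot.of_mul_root_eq_zero (monic_X_pow_sub_C D two_ne_zero)
      (by rw [natDegree_X_pow_sub_C]; norm_num) ?_
    change pellOf D _ * pellSqrt D = 0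
    rw [map_mul, map_sub, map_ofNat]
    linear_combination h
  simpa [sub_eq_zero] using h2

theorem stmt_6_general (u v D : Polynomial ℂ)
    (hPell : u ^ 2 - D * v ^ 2 = 1)
    (vn : ℕ → Polynomial ℂ)
    (hvn : ∀ n : ℕ, 1 ≤ n →
      pellOf D (vn n) * (2 * pellSqrt D) =
        (pellOf D u + pellOf D v * pellSqrt D) ^ n -
        (pellOf D u - pellOf D v * pellSqrt D) ^ n) :
    ∃ ψ : ℕ → Polynomial ℂ,
      (∀ m : ℕ, 1 < m →
        pellOf D (ψ m) =
          ∏ ζ ∈ (Polynomial.cyclotomic m ℂ).roots.toFinset,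
            ((pellOf D u + pellOf D v * pellSqrt D) -
              pellOf D (C ζ) * (pellOf D u - pellOf D v * pellSqrt D))) ∧
      (∀ m : ℕ, 1 < m → ∃ p : Polynomial ℤ,
        ψ m = (p.map (Int.castRingHom ℂ)).comp (2 * u)) ∧
      (∀ n : ℕ, 1 ≤ n →
        vn n = v * ∏ m ∈ n.divisors.filter (fun m => 1 < m), ψ m) := by
  set α := pellOf D u + pellOf D v * pellSqrt D
  set β := pellOf D u - pellOf D v * pellSqrt D
  have hαβ : α * β = 1 := by
    have h := congrArg (pellOf D) hPell
    rw [map_sub, map_mul, map_pow, map_pow, ← pellSqrt_sq, map_one] at h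
    linear_combination h
  set ψ : ℕ → Polynomial ℂ := fun m =>
    ((dicksonTransform (cyclotomic m ℤ)).map (Int.castRingHom ℂ)).comp (2 * u)
  have hψ : ∀ m, 1 < m →
      pellOf D (ψ m) = β ^ m.totient * (cyclotomic m (PellExt D)).eval (α ^ 2) := by
    intro m hm
    have hsum : pellOf D (2 * u) = α + β := by rw [map_mul, map_ofNat]; ring
    rw [hom_map_intCast_comp, hsum, aeval_add_dicksonTransform hαβ (reverse_cyclotomic_int hm),
      natDegree_cyclotomic, aeval_def, eval₂_eq_eval_map, map_cyclotomic]
  refine ⟨ψ, fun m hm => ?_, fun m _ => ⟨_, rfl⟩, fun n hn => ?_⟩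
  · have : NeZero (m : ℂ) := ⟨by exact_mod_cast (by omega : m ≠ 0)⟩
    rw [hψ m hm, ← Multiset.toFinset_eq roots_cyclotomic_nodup,
      cyclotomic.roots_to_finset_eq_primitiveRoots,
      ← prod_primitiveRoots_sub_mul (Complex.isPrimitiveRoot_exp m (by omega)) hαβ]
    rfl
  · refine eq_of_pellOf_mul_two_pellSqrt_eq (D := D) ?_
    rw [hvn n hn, pow_sub_pow_eq_sub_mul_prod_eval_cyclotomic hαβ hn, map_mul, map_prod,
      prod_congr rfl fun m hm => hψ m (mem_filter.mp hm).2]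
    ring

theorem stmt_6 (u v D : Polynomial ℂ) (hv : v ≠ 0) (hD : 1 ≤ D.natDegree)
    (hPell : u ^ 2 - D * v ^ 2 = 1)
    (vn : ℕ → Polynomial ℂ)
    (hvn : ∀ n : ℕ, 1 ≤ n →
      pellOf D (vn n) * (2 * pellSqrt D) =
        (pellOf D u + pellOf D v * pellSqrt D) ^ n -
        (pellOf D u - pellOf D v * pellSqrt D) ^ n) :
    ∃ ψ : ℕ → Polynomial ℂ,
      (∀ m : ℕ, 1 < m →
        pellOf D (ψ m) =
          ∏ ζ ∈ (Polynomial.cyclotomic m ℂ).roots.toFinset,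
            ((pellOf D u + pellOf D v * pellSqrt D) -
              pellOf D (C ζ) * (pellOf D u - pellOf D v * pellSqrt D))) ∧
      (∀ m : ℕ, 1 < m → ∃ p : Polynomial ℤ,
        ψ m = (p.map (Int.castRingHom ℂ)).comp (2 * u)) ∧
      (∀ n : ℕ, 1 ≤ n →
        vn n = v * ∏ m ∈ n.divisors.filter (fun m => 1 < m), ψ m) :=
  stmt_6_general u v D hPell vn hvn
end

section
/- For each integer m > 1, define ψ_m(u) = ∏_{ζ: primitive m-th root of unity in ℂ} ((u + √(u²-1)) - ζ·(u - √(u²-1))) regarded as a polynomial in u. Then ψ_m(u) = 2^φ(m) · ∏_{1 ≤ r < m, gcd(r,m)=1} (u - cos(rπ/m)). -/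
/-!
Write `x = u + s`, `y = u - s`, so `x * y = 1`, and `θ_r = r π / m`. The primitive `m`-th roots
of unity are `e^{2 i θ_r}` for `r ∈ [1, m)` coprime to `m`, and each factor splits as
`x - e^{2 i θ_r} y = (x - e^{i θ_r}) (x + e^{i θ_r}) y`, while
`2 (u - cos θ_r) = (x - e^{i θ_r}) (x - e^{-i θ_r}) y`. The reflection `r ↦ m - r` of the
index set sends `e^{-i θ_r}` to `-e^{i θ_r}`, so the two products agree.
-/

open Complex Finset
open scoped Real

theorem IsPrimitiveRoot.prod_primitiveRoots {R M : Type*} [CommRing R] [IsDomain R]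
    [DecidableEq R] [CommMonoid M] {k : ℕ} [NeZero k] {ζ : R} (hζ : IsPrimitiveRoot ζ k)
    (f : R → M) :
    ∏ ξ ∈ primitiveRoots k R, f ξ = ∏ i ∈ range k with i.Coprime k, f (ζ ^ i) := by
  have himage : primitiveRoots k R = {i ∈ range k | i.Coprime k}.image (ζ ^ ·) := by
    ext ξ
    simp [mem_primitiveRoots (NeZero.pos k), hζ.isPrimitiveRoot_iff, and_assoc]
  rw [himage, prod_image]
  intro i hi j hj
  simp only [coe_filter, mem_range, Set.mem_ofPred_eq] at hi hj
  exact hζ.pow_inj hi.1 hj.1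

namespace Nat

theorem filter_coprime_range_eq_Ico_one {m : ℕ} (hm : m ≠ 1) :
    {r ∈ range m | r.Coprime m} = {r ∈ Ico 1 m | r.Coprime m} := by
  ext r
  simp only [mem_filter, mem_range, mem_Ico]
  constructor
  · rintro ⟨hr, hcop⟩
    refine ⟨⟨Nat.pos_of_ne_zero ?_, hr⟩, hcop⟩
    rintro rfl
    exact hm (Nat.coprime_zero_left m |>.mp hcop)
  · rintro ⟨⟨-, hr⟩, hcop⟩
    exact ⟨hr, hcop⟩

theorem card_filter_coprime_Ico_one_eq_totient {m : ℕ} (hm : m ≠ 1) :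
    #{r ∈ Ico 1 m | r.Coprime m} = φ m := by
  simp_rw [← filter_coprime_range_eq_Ico_one hm, totient_eq_card_coprime, coprime_comm]

theorem prod_filter_coprime_Ico_one_reflect {M : Type*} [CommMonoid M] (m : ℕ) (f : ℕ → M) :
    ∏ r ∈ Ico 1 m with r.Coprime m, f (m - r) = ∏ r ∈ Ico 1 m with r.Coprime m, f r := by
  have hmaps : ∀ r ∈ {r ∈ Ico 1 m | r.Coprime m},
      m - r ∈ {r ∈ Ico 1 m | r.Coprime m} := by
    intro r hr
    simp only [mem_filter, mem_Ico] at hr ⊢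
    exact ⟨by omega, (coprime_self_sub_left hr.1.2.le).mpr hr.2⟩
  refine prod_nbij' (m - ·) (m - ·) hmaps hmaps ?_ ?_ (fun _ _ => rfl) <;>
  · intro r hr
    simp only [mem_filter, mem_Ico] at hr
    omega

end Nat

theorem sub_sq_mul_eq_of_mul_eq_one {R : Type*} [CommRing R] {x y : R} (hxy : x * y = 1)
    (b : R) :
    x - b ^ 2 * y = (x - b) * (x + b) * y := by
  linear_combination -x * hxy

theorem add_sub_add_eq_mul_of_mul_eq_one {R : Type*} [CommRing R] {x y b c : R} (hxy : x * y = 1)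
    (hbc : b * c = 1) : (x + y) - (b + c) = (x - b) * (x - c) * y := by
  linear_combination (b + c - x) * hxy - y * hbc

namespace Complex

theorem exp_two_pi_mul_I_div_pow (m r : ℕ) :
    exp (2 * π * I / m) ^ r = exp (r * π / m * I) ^ 2 := by
  rw [← exp_nat_mul, ← exp_nat_mul]
  ring_nf

theorem exp_mul_I_mul_exp_neg_mul_I (z : ℂ) : exp (z * I) * exp (-z * I) = 1 := by
  rw [← exp_add, ← add_mul, add_neg_cancel, zero_mul, exp_zero]

theorem exp_neg_sub_mul_pi_div_mul_I {m r : ℕ} (hm : m ≠ 0) (hrm : r ≤ m) :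
    exp (-((m - r : ℕ) * π / m) * I) = -exp (r * π / m * I) := by
  have hmC : (m : ℂ) ≠ 0 := Nat.cast_ne_zero.mpr hm
  have harg : -((m - r : ℕ) * π / m) * I = r * π / m * I - π * I := by
    rw [Nat.cast_sub hrm]
    field_simp
    ring
  rw [harg, exp_sub, exp_pi_mul_I, div_neg, div_one]

end Complex

theorem stmt_8 (m : ℕ) (hm : 1 < m) (u s : ℂ) (hs : s ^ 2 = u ^ 2 - 1) :
    ∏ ζ ∈ primitiveRoots m ℂ, ((u + s) - ζ * (u - s))
      = 2 ^ m.totient *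
        ∏ r ∈ (Finset.Ico 1 m).filter (fun r => r.Coprime m),
          (u - Complex.cos ((r : ℂ) * Real.pi / (m : ℂ))) := by
  have hm0 : m ≠ 0 := by omega
  have : NeZero m := ⟨hm0⟩
  set x := u + s
  set y := u - s
  have hxy : x * y = 1 := by linear_combination -hs
  set θ : ℕ → ℂ := fun r => r * π / m
  set S := {r ∈ Ico 1 m | r.Coprime m}
  have hreflect : ∏ r ∈ S, (x + exp (θ r * I)) = ∏ r ∈ S, (x - exp (-θ r * I)) := by
    rw [← Nat.prod_filter_coprime_Ico_one_reflect m (fun r => x - exp (-θ r * I))]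
    refine prod_congr rfl fun r hr => ?_
    rw [exp_neg_sub_mul_pi_div_mul_I hm0 (mem_Ico.mp (mem_filter.mp hr).1).2.le, sub_neg_eq_add]
  calc ∏ ζ ∈ primitiveRoots m ℂ, (x - ζ * y)
      = ∏ r ∈ S, (x - exp (θ r * I) ^ 2 * y) := by
        rw [(isPrimitiveRoot_exp m hm0).prod_primitiveRoots,
          Nat.filter_coprime_range_eq_Ico_one hm.ne']
        simp_rw [exp_two_pi_mul_I_div_pow]
        rfl
    _ = ∏ r ∈ S, ((x - exp (θ r * I)) * (x + exp (θ r * I)) * y) := by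
        simp_rw [sub_sq_mul_eq_of_mul_eq_one hxy]
    _ = ∏ r ∈ S, ((x - exp (θ r * I)) * (x - exp (-θ r * I)) * y) := by
        simp_rw [prod_mul_distrib, hreflect]
    _ = ∏ r ∈ S, 2 * (u - cos (θ r)) := by
        refine prod_congr rfl fun r _ => ?_
        rw [← add_sub_add_eq_mul_of_mul_eq_one hxy (exp_mul_I_mul_exp_neg_mul_I _), ← two_cos]
        ring
    _ = _ := by rw [← pow_card_mul_prod, Nat.card_filter_coprime_Ico_one_eq_totient hm.ne']
end

section
/- Let m > 1 be an even integer. The polynomial ψ_m(u) = 2^φ(m)·∏_{1≤r<m, gcd(r,m)=1}(u - cos(rπ/m)) has rational coefficients and is irreducible over ℚ. -/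
/-!
Let `ζ = exp(πi/m)`, a primitive `2m`-th root of unity, so that `cos(rπ/m) = (ζ^r + ζ^{-r})/2`.
For `r` coprime to `2m` (for even `m`, the same as coprime to `m`) there is an embedding of
`ℚ(ζ)` into `ℂ` sending `ζ` to `ζ^r`; it sends `cos(π/m)` to `cos(rπ/m)`, so these `φ(m)`
distinct numbers are roots of the minimal polynomial `q` of `cos(π/m)`. On the other hand
`ℚ(cos(π/m)) ⊆ ℝ` is a proper subfield of `ℚ(ζ)`, whose degree is `φ(2m) = 2φ(m)`, so
`deg q ≤ φ(m)`. Hence `q = ∏ (X - cos(rπ/m))`, and `ψ_m = 2^φ(m) q`.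
-/

open Polynomial
open scoped IntermediateField

theorem Polynomial.Monic.eq_prod_X_sub_C_of_injOn {R ι : Type*} [CommRing R] [IsDomain R]
    {p : R[X]} {s : Finset ι} {f : ι → R} (hp : p.Monic) (hf : Set.InjOn f s)
    (hroot : ∀ i ∈ s, p.IsRoot (f i)) (hdeg : p.natDegree ≤ s.card) :
    p = ∏ i ∈ s, (X - C (f i)) := by
  have hmonic : (∏ i ∈ s, (X - C (f i))).Monic :=
    monic_prod_of_monic _ _ fun i _ => monic_X_sub_C _
  have hprod : ∏ i ∈ s, (X - C (f i)) = ((s.val.map f).map fun a => X - C a).prod := by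
    rw [Finset.prod_eq_multiset_prod, Multiset.map_map]
    rfl
  have hdvd : ∏ i ∈ s, (X - C (f i)) ∣ p := by
    rw [hprod, Multiset.prod_X_sub_C_dvd_iff_le_roots hp.ne_zero,
      Multiset.le_iff_subset (Multiset.Nodup.map_on hf s.nodup)]
    intro a ha
    obtain ⟨i, hi, rfl⟩ := Multiset.mem_map.mp ha
    exact (mem_roots hp.ne_zero).mpr (hroot i hi)
  refine eq_of_monic_of_dvd_of_natDegree_le hmonic hp hdvd ?_
  rwa [natDegree_prod_of_monic _ _ fun i _ => monic_X_sub_C _,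
    Finset.sum_congr rfl fun i _ => natDegree_X_sub_C (f i), Finset.sum_const, smul_eq_mul,
    mul_one]

section FieldTheory

variable {K L : Type*} [Field K] [Field L] [Algebra K L]

theorem IntermediateField.half_add_inv_mem_adjoin_simple (μ : L) :
    (μ + μ⁻¹) / 2 ∈ K⟮μ⟯ :=
  have hμ := mem_adjoin_simple_self K μ
  div_mem (add_mem hμ (inv_mem hμ)) (ofNat_mem _ 2)

theorem IntermediateField.isIntegral_of_mem_adjoin_simple {μ x : L} (hμ : IsIntegral K μ)
    (hx : x ∈ K⟮μ⟯) : IsIntegral K x := by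
  have := adjoin.finiteDimensional hμ
  simpa using
    (IsIntegral.of_finite K (⟨x, hx⟩ : K⟮μ⟯)).map (IsScalarTower.toAlgHom K K⟮μ⟯ L)

theorem minpoly.aeval_half_add_inv_of_aeval {μ ν : L} (hμ : IsIntegral K μ)
    (hν : Polynomial.aeval ν (minpoly K μ) = 0) :
    Polynomial.aeval ((ν + ν⁻¹) / 2) (minpoly K ((μ + μ⁻¹) / 2)) = 0 := by
  set σ := (IntermediateField.algHomAdjoinIntegralEquiv K (K := L) hμ).symm
    ⟨ν, mem_aroots.mpr ⟨minpoly.ne_zero hμ, hν⟩⟩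
  set g := IntermediateField.AdjoinSimple.gen K μ
  have hσg : σ g = ν := IntermediateField.algHomAdjoinIntegralEquiv_symm_apply_gen K hμ _
  have hcoe : (((g + g⁻¹) / 2 : K⟮μ⟯) : L) = (μ + μ⁻¹) / 2 := by
    push_cast [g]
    rfl
  have hσ : σ ((g + g⁻¹) / 2) = (ν + ν⁻¹) / 2 := by
    rw [map_div₀, map_add, map_inv₀, hσg, map_ofNat]
  rw [← hcoe, ← hσ, ← IntermediateField.minpoly_eq, aeval_algHom_apply, minpoly.aeval,
    map_zero]

theorem minpoly.two_mul_natDegree_le_of_notMem_adjoin {μ x : L} (hμ : IsIntegral K μ)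
    (hx : x ∈ K⟮μ⟯) (hμx : μ ∉ K⟮x⟯) :
    2 * (minpoly K x).natDegree ≤ (minpoly K μ).natDegree := by
  have := IntermediateField.adjoin.finiteDimensional hμ
  have hxint := IntermediateField.isIntegral_of_mem_adjoin_simple hμ hx
  have hle : K⟮x⟯ ≤ K⟮μ⟯ := IntermediateField.adjoin_simple_le_iff.mpr hx
  obtain ⟨k, hk⟩ : (minpoly K x).natDegree ∣ (minpoly K μ).natDegree := by
    rw [← IntermediateField.adjoin.finrank hμ, ← IntermediateField.adjoin.finrank hxint]
    exact IntermediateField.finrank_dvd_of_le_right hle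
  have hk1 : k ≠ 1 := by
    rintro rfl
    refine hμx ?_
    rw [IntermediateField.eq_of_le_of_finrank_eq hle (by
      rw [IntermediateField.adjoin.finrank hμ, IntermediateField.adjoin.finrank hxint, hk,
        mul_one])]
    exact IntermediateField.mem_adjoin_simple_self K μ
  have hpos := natDegree_pos hμ
  rcases k with _ | _ | k
  · omega
  · exact absurd rfl hk1
  · rw [hk]
    nlinarith

end FieldTheory

namespace Complex

theorem isPrimitiveRoot_exp_pi_div_mul_I {m : ℕ} (hm : m ≠ 0) :
    IsPrimitiveRoot (exp (Real.pi / m * I)) (2 * m) := by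
  convert isPrimitiveRoot_exp (2 * m) (by omega) using 2
  push_cast
  field_simp

theorem cos_nat_mul_eq_half_add_inv (r : ℕ) (z : ℂ) :
    cos (r * z) = (exp (z * I) ^ r + (exp (z * I) ^ r)⁻¹) / 2 := by
  rw [← exp_nat_mul, ← exp_neg, eq_div_iff two_ne_zero, mul_comm, two_cos, neg_mul, mul_assoc]

theorem cos_nat_mul_pi_div (r m : ℕ) :
    cos (r * Real.pi / m) =
      (exp (Real.pi / m * I) ^ r + (exp (Real.pi / m * I) ^ r)⁻¹) / 2 := by
  rw [mul_div_assoc, cos_nat_mul_eq_half_add_inv]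

theorem cos_pi_div (m : ℕ) :
    cos (Real.pi / m) = (exp (Real.pi / m * I) + (exp (Real.pi / m * I))⁻¹) / 2 := by
  simpa using cos_nat_mul_pi_div 1 m

theorem notMem_adjoin_ofReal {z : ℂ} (hz : z.im ≠ 0) (x : ℝ) : z ∉ ℚ⟮(x : ℂ)⟯ := by
  intro hzx
  have hle : ℚ⟮(x : ℂ)⟯ ≤ ofRealHom.toRatAlgHom.fieldRange :=
    IntermediateField.adjoin_simple_le_iff.mpr ⟨x, rfl⟩
  obtain ⟨y, rfl⟩ := hle hzx
  exact hz (ofReal_im y)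

theorem injOn_cos_nat_mul_pi_div {m : ℕ} (hm : 0 < m) :
    Set.InjOn (fun r : ℕ => cos (r * Real.pi / m)) (Set.Iic m) := by
  have hmem : ∀ r ∈ Set.Iic m, (r : ℝ) * Real.pi / m ∈ Set.Icc 0 Real.pi := fun r hr =>
    ⟨by positivity, div_le_of_le_mul₀ (by positivity) Real.pi_pos.le
      (by rw [mul_comm]; gcongr; exact_mod_cast hr)⟩
  intro r hr s hs hrs
  have hcos : Real.cos (r * Real.pi / m) = Real.cos (s * Real.pi / m) := by
    simp only at hrs
    exact_mod_cast hrs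
  have := Real.injOn_cos (hmem r hr) (hmem s hs) hcos
  field_simp at this
  exact_mod_cast this

theorem isIntegral_cos_pi_div {m : ℕ} (hm : m ≠ 0) : IsIntegral ℚ (cos (Real.pi / m)) := by
  rw [cos_pi_div]
  exact IntermediateField.isIntegral_of_mem_adjoin_simple
    ((isPrimitiveRoot_exp_pi_div_mul_I hm).isIntegral (by omega)).tower_top
    (IntermediateField.half_add_inv_mem_adjoin_simple _)

theorem aeval_cos_nat_mul_pi_div_minpoly {m r : ℕ} (hm : m ≠ 0) (hr : r.Coprime (2 * m)) :
    aeval (cos (r * Real.pi / m)) (minpoly ℚ (cos (Real.pi / m))) = 0 := by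
  have hζ := isPrimitiveRoot_exp_pi_div_mul_I hm
  rw [cos_nat_mul_pi_div, cos_pi_div]
  refine minpoly.aeval_half_add_inv_of_aeval (hζ.isIntegral (by omega)).tower_top ?_
  rw [← cyclotomic_eq_minpoly_rat hζ (by omega), ← eval_map_algebraMap, map_cyclotomic]
  exact (hζ.pow_of_coprime r hr).isRoot_cyclotomic (by omega)

theorem natDegree_minpoly_cos_pi_div_le {m : ℕ} (hm : 1 < m) (heven : Even m) :
    (minpoly ℚ (cos (Real.pi / m))).natDegree ≤ m.totient := by
  have hζ := isPrimitiveRoot_exp_pi_div_mul_I (m := m) (by omega)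
  have hdeg_ζ : (minpoly ℚ (exp (Real.pi / m * I))).natDegree = 2 * m.totient := by
    rw [← cyclotomic_eq_minpoly_rat hζ (by omega), natDegree_cyclotomic,
      Nat.totient_mul_of_prime_of_dvd Nat.prime_two heven.two_dvd]
  have hζ_notMem : exp (Real.pi / m * I) ∉ ℚ⟮cos (Real.pi / m)⟯ := by
    rw [← ofReal_natCast, ← ofReal_div, ← ofReal_cos]
    refine notMem_adjoin_ofReal ?_ _
    rw [exp_ofReal_mul_I_im]
    exact (Real.sin_pos_of_pos_of_lt_pi (by positivity)
      (div_lt_self Real.pi_pos (by exact_mod_cast hm))).ne'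
  have := minpoly.two_mul_natDegree_le_of_notMem_adjoin (hζ.isIntegral (by omega)).tower_top
    (cos_pi_div m ▸ IntermediateField.half_add_inv_mem_adjoin_simple _) hζ_notMem
  omega

end Complex

theorem Nat.card_filter_Ico_one_coprime {m : ℕ} (hm : m ≠ 1) :
    ((Finset.Ico 1 m).filter (fun r => r.Coprime m)).card = m.totient := by
  rw [Nat.totient_eq_card_coprime]
  congr 1
  ext r
  simp only [Finset.mem_filter, Finset.mem_Ico, Finset.mem_range, Nat.coprime_comm (m := r)]
  constructor
  · exact fun ⟨⟨_, hr⟩, hcop⟩ => ⟨hr, hcop⟩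
  · rintro ⟨hr, hcop⟩
    refine ⟨⟨Nat.pos_of_ne_zero ?_, hr⟩, hcop⟩
    rintro rfl
    exact hm (Nat.coprime_zero_left m |>.mp hcop)

theorem minpoly_cos_pi_div_map_eq_prod {m : ℕ} (hm : 1 < m) (heven : Even m) :
    (minpoly ℚ (Complex.cos (Real.pi / m))).map (algebraMap ℚ ℂ) =
      ∏ r ∈ (Finset.Ico 1 m).filter (fun r => r.Coprime m),
        (X - C (Complex.cos ((r : ℂ) * Real.pi / (m : ℂ)))) := by
  refine (minpoly.monic (Complex.isIntegral_cos_pi_div (by omega))).map _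
    |>.eq_prod_X_sub_C_of_injOn ?_ ?_ ?_
  · exact (Complex.injOn_cos_nat_mul_pi_div (by omega)).mono fun r hr =>
      (Finset.mem_Ico.mp (Finset.mem_filter.mp hr).1).2.le
  · intro r hr
    have hrm := (Finset.mem_filter.mp hr).2
    rw [IsRoot, eval_map_algebraMap]
    exact Complex.aeval_cos_nat_mul_pi_div_minpoly (by omega)
      ((hrm.coprime_dvd_right heven.two_dvd).mul_right hrm)
  · rw [natDegree_map, Nat.card_filter_Ico_one_coprime hm.ne']
    exact Complex.natDegree_minpoly_cos_pi_div_le hm heven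

theorem stmt_12 (m : ℕ) (hm : 1 < m) (heven : Even m) :
    ∃ p : Polynomial ℚ, Irreducible p ∧
      p.map (algebraMap ℚ ℂ) =
        C ((2 : ℂ) ^ m.totient) *
          ∏ r ∈ (Finset.Ico 1 m).filter (fun r => r.Coprime m),
            (X - C (Complex.cos ((r : ℂ) * Real.pi / (m : ℂ)))) := by
  refine ⟨C (2 ^ m.totient) * minpoly ℚ (Complex.cos (Real.pi / m)), ?_, ?_⟩
  · exact (irreducible_isUnit_mul (isUnit_C.mpr (pow_ne_zero _ two_ne_zero).isUnit)).mpr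
      (minpoly.irreducible (Complex.isIntegral_cos_pi_div (by omega)))
  · rw [Polynomial.map_mul, map_C, minpoly_cos_pi_div_map_eq_prod hm heven]
    norm_num
end

section
/- Let P, Q be polynomials with rational coefficients with Q nonconstant. Then every irreducible rational factor of the composition P(Q(X)) has degree at least the minimal degree among the irreducible rational factors of P(X). -/
open Polynomial

theorem stmt_14 (P Q : Polynomial ℚ) (hP : 1 ≤ P.natDegree) (hQ : 1 ≤ Q.natDegree)
    (f : Polynomial ℚ) (hf : Irreducible f) (hdvd : f ∣ P.comp Q) :
    ∃ g : Polynomial ℚ, Irreducible g ∧ g ∣ P ∧ g.natDegree ≤ f.natDegree := by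
  have hf0 : f ≠ 0 := hf.ne_zero
  have hP0 : P ≠ 0 := fun h => by simp [h] at hP
  -- get a complex root α of f
  have hdegmap : 0 < (f.map (algebraMap ℚ ℂ)).degree := by
    rw [degree_map]
    exact natDegree_pos_iff_degree_pos.mp hf.natDegree_pos
  obtain ⟨α, hαroot⟩ := Complex.exists_root hdegmap
  have hα : aeval α f = 0 := by
    rwa [aeval_def, ← eval_map, ← IsRoot.def]
  set β := aeval α Q with hβdef
  have hβ : aeval β P = 0 := by
    obtain ⟨c, hc⟩ := hdvd
    have : aeval α (P.comp Q) = 0 := by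
      rw [hc, map_mul, hα, zero_mul]
    rwa [aeval_comp] at this
  have hβint : IsIntegral ℚ β := IsAlgebraic.isIntegral ⟨P, hP0, hβ⟩
  have hαint : IsIntegral ℚ α := IsAlgebraic.isIntegral ⟨f, hf0, hα⟩
  refine ⟨minpoly ℚ β, minpoly.irreducible hβint, minpoly.dvd ℚ β hβ, ?_⟩
  -- ℚ(β) ⊆ ℚ(α)
  set K := IntermediateField.adjoin ℚ ({α} : Set ℂ) with hK
  haveI : FiniteDimensional ℚ K := IntermediateField.adjoin.finiteDimensional hαint
  have hαmem : α ∈ K := IntermediateField.mem_adjoin_simple_self ℚ α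
  have hβmem : β ∈ K := by
    rw [hβdef]
    exact IntermediateField.algebra_adjoin_le_adjoin ℚ {α} (aeval_mem_adjoin_singleton ℚ α)
  set β' : K := ⟨β, hβmem⟩ with hβ'
  have h1 : minpoly ℚ β = minpoly ℚ β' := by
    have : β = algebraMap K ℂ β' := rfl
    rw [this, minpoly.algebraMap_eq (algebraMap K ℂ).injective]
  have h2 : (minpoly ℚ β').natDegree ≤ Module.finrank ℚ K := minpoly.natDegree_le β'
  have h3 : Module.finrank ℚ K = (minpoly ℚ α).natDegree :=
    IntermediateField.adjoin.finrank hαint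
  have h4 : (minpoly ℚ α).natDegree = f.natDegree := by
    have := minpoly.eq_of_irreducible hf hα
    rw [← this, natDegree_mul_C (inv_ne_zero (leadingCoeff_ne_zero.mpr hf0))]
  have h1' : (minpoly ℚ β).natDegree = (minpoly ℚ β').natDegree := by rw [h1]
  omega
end

section
/- Let u, v, D ∈ ℂ[t] with v ≠ 0 and u² - D·v² = 1. If (t-α)² divides v(t) for some α ∈ ℂ, then (t-α)³ divides u′(t). -/
open Polynomial

lemma aux_deriv_dvd (α : ℂ) (w : Polynomial ℂ) (hw : (X - C α) ^ 4 ∣ w) :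
    (X - C α) ^ 3 ∣ derivative w := by
  obtain ⟨q, rfl⟩ := hw
  rw [derivative_mul, derivative_pow, derivative_X_sub_C, mul_one]
  exact dvd_add (((dvd_refl _).mul_left _).mul_right _)
    ((pow_dvd_pow _ (by norm_num)).mul_right _)

theorem stmt_16 (u v D : Polynomial ℂ) (hv : v ≠ 0)
    (hPell : u ^ 2 - D * v ^ 2 = 1) (α : ℂ)
    (h : (X - C α) ^ 2 ∣ v) :
    (X - C α) ^ 3 ∣ derivative u := by
  set p : Polynomial ℂ := X - C α with hp
  have hprime : Prime p := prime_X_sub_C α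
  have h4 : p ^ 4 ∣ (u - 1) * (u + 1) := by
    have : (u - 1) * (u + 1) = D * v ^ 2 := by linear_combination hPell
    rw [this]
    have : p ^ 4 ∣ v ^ 2 := by
      have := pow_dvd_pow_of_dvd h 2
      rwa [← pow_mul] at this
    exact this.mul_left D
  have hnot2 : ¬ p ∣ (2 : Polynomial ℂ) := by
    intro hd
    have := (degree_le_of_dvd hd two_ne_zero).trans_eq (degree_C (by norm_num : (2:ℂ) ≠ 0))
    rw [hp, degree_X_sub_C] at this
    norm_num at this
  by_cases hd : p ∣ (u - 1)
  · have hnd : ¬ p ∣ (u + 1) := fun hd' => hnot2 (by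
      have h2 := dvd_sub hd' hd
      have e : u + 1 - (u - 1) = 2 := by ring
      rwa [e] at h2)
    have : p ^ 4 ∣ (u - 1) := hprime.pow_dvd_of_dvd_mul_right 4 hnd h4
    have := aux_deriv_dvd α (u - 1) this
    simpa using this
  · have : p ^ 4 ∣ (u + 1) := hprime.pow_dvd_of_dvd_mul_left 4 hd h4
    have := aux_deriv_dvd α (u + 1) this
    simpa using this
end

section
/- Let D ∈ ℂ[t] be a nonconstant polynomial such that the number of distinct complex roots of D is at most (1/2)·deg D. Then the polynomial Pell equation X² - D·Y² = 1 has no solutions X, Y ∈ ℂ[t] with Y ≠ 0. -/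
/-!
Apply Mason–Stothers to `x² + (-D y²) + (-1) = 0`, whose terms are coprime because the sum of
the first two is a unit. As `D y²` is nonconstant (in characteristic zero the derivative
alternative is excluded), `deg D + 2 deg y < deg rad (x² D y²) ≤ deg x + n(D) + deg y`, where
`n(D)` counts the distinct roots of `D`. Since `2 deg x = deg D + 2 deg y`, this gives
`deg D < 2 n(D)`.
-/

open Polynomial UniqueFactorizationMonoid

namespace Polynomial

variable {k : Type*} [Field k] [DecidableEq k]

theorem natDegree_radical_mul_le (a b : k[X]) :
    (radical (a * b)).natDegree ≤ (radical a).natDegree + (radical b).natDegree := by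
  rw [← natDegree_mul radical_ne_zero radical_ne_zero]
  exact natDegree_le_of_dvd radical_mul_dvd (mul_ne_zero radical_ne_zero radical_ne_zero)

theorem natDegree_radical_le_card_roots_toFinset [IsAlgClosed k] (p : k[X]) :
    (radical p).natDegree ≤ p.roots.toFinset.card := by
  rcases eq_or_ne p 0 with rfl | hp
  · simp
  have hnodup : (radical p).roots.Nodup :=
    nodup_roots (PerfectField.separable_iff_squarefree.mpr squarefree_radical)
  rw [← IsAlgClosed.card_roots_eq_natDegree, ← Multiset.toFinset_card_of_nodup hnodup]
  exact Finset.card_le_card <| Multiset.toFinset_subset.mpr <|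
    Multiset.subset_of_le (roots.le_of_dvd hp radical_dvd_self)

theorem natDegree_lt_natDegree_radical_mul_of_sub_eq_one [CharZero k] {a b : k[X]}
    (hb : 0 < b.natDegree) (hab : a - b = 1) :
    b.natDegree < (radical (a * b)).natDegree := by
  have hb0 : b ≠ 0 := ne_zero_of_natDegree_gt hb
  have ha0 : a ≠ 0 := by
    rintro rfl
    rw [zero_sub, neg_eq_iff_eq_neg] at hab
    simp [hab] at hb
  rcases Polynomial.abc ha0 (neg_ne_zero.mpr hb0) (neg_ne_zero.mpr one_ne_zero)
      ⟨1, 1, by linear_combination hab⟩ (by linear_combination hab) with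
    ⟨-, hlt, -⟩ | ⟨-, hderiv, -⟩
  · rwa [natDegree_neg, show a * -b * -1 = a * b by ring] at hlt
  · rw [derivative_neg, neg_eq_zero, derivative_eq_zero] at hderiv
    omega

end Polynomial

theorem stmt_18 (D : Polynomial ℂ) (hD : 1 ≤ D.natDegree)
    (hroots : 2 * D.roots.toFinset.card ≤ D.natDegree) :
    ¬ ∃ x y : Polynomial ℂ, y ≠ 0 ∧ x ^ 2 - D * y ^ 2 = 1 := by
  classical
  rintro ⟨x, y, hy, hpell⟩
  have hdegDy : (D * y ^ 2).natDegree = D.natDegree + 2 * y.natDegree := by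
    rw [natDegree_mul (ne_zero_of_natDegree_gt hD) (pow_ne_zero 2 hy), natDegree_pow]
  have hdegx : 2 * x.natDegree = D.natDegree + 2 * y.natDegree := by
    rw [← natDegree_pow, eq_add_of_sub_eq hpell,
      natDegree_add_eq_right_of_natDegree_lt (by rw [natDegree_one, hdegDy]; omega), hdegDy]
  have hmason := natDegree_lt_natDegree_radical_mul_of_sub_eq_one (by omega) hpell
  have hrad : (radical (x ^ 2 * (D * y ^ 2))).natDegree ≤
      x.natDegree + (D.roots.toFinset.card + y.natDegree) :=
    calc _ ≤ (radical (x ^ 2)).natDegree + (radical (D * y ^ 2)).natDegree :=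
          natDegree_radical_mul_le _ _
      _ ≤ (radical x).natDegree + ((radical D).natDegree + (radical y).natDegree) := by
          rw [radical_pow x two_ne_zero, ← radical_pow y two_ne_zero]
          exact add_le_add_right (natDegree_radical_mul_le _ _) _
      _ ≤ x.natDegree + (D.roots.toFinset.card + y.natDegree) := by
          gcongr
          exacts [natDegree_radical_le, natDegree_radical_le_card_roots_toFinset D,
            natDegree_radical_le]
  omega
end
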